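/- arXiv:1403.0271 — 3 statements merged into one kernel-verified Lean document; each statement's English description precedes it below -/
import Mathlib

section
/- The function f(β,μ) = -(1/(πβ)) ∫₀^∞ log(1 + e^{-β(k²-μ)}) dk is a smooth (infinitely differentiable) function of (β,μ) on the domain β > 0, μ ∈ ℝ. -/
open Real MeasureTheory
open Set

lemma norm_clog_le {ζ : ℂ} (h : 1 ≤ ζ.re) : ‖Complex.log ζ‖ ≤ 2 * ‖ζ - 1‖ := by
  have hre : 0 < ζ.re := lt_of_lt_of_le one_pos h
  have habs1 : 1 ≤ ‖ζ‖ := h.trans (Complex.re_le_norm ζ)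
  have h1 : ‖Complex.log ζ‖ ≤ |Real.log (‖ζ‖)| + |Complex.arg ζ| := by
    simpa [Complex.log_re, Complex.log_im] using Complex.norm_le_abs_re_add_abs_im (Complex.log ζ)
  have h2 : |Real.log (‖ζ‖)| ≤ ‖ζ - 1‖ := by
    rw [abs_of_nonneg (Real.log_nonneg habs1)]
    have hl := Real.log_le_sub_one_of_pos (lt_of_lt_of_le one_pos habs1)
    have htri : ‖ζ‖ ≤ ‖ζ - 1‖ + 1 := by
      simpa using norm_add_le (ζ - 1) 1
    linarith
  have h3 : |Complex.arg ζ| ≤ ‖ζ - 1‖ := by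
    have him : |ζ.im| ≤ ‖ζ - 1‖ := by
      simpa using Complex.abs_im_le_norm (ζ - 1)
    have harg2 : |Complex.arg ζ| < π / 2 := Complex.abs_arg_lt_pi_div_two_iff.2 (Or.inl hre)
    have key : |Complex.arg ζ| ≤ |ζ.im| / ζ.re := by
      have habsdiv : |ζ.im| / ζ.re = |ζ.im / ζ.re| := by
        rw [abs_div, abs_of_pos hre]
      rw [habsdiv, ← Complex.tan_arg]
      rcases lt_trichotomy (Complex.arg ζ) 0 with hlt | heq | hgt
      · have h4 : -Complex.arg ζ < Real.tan (-Complex.arg ζ) :=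
          Real.lt_tan (by linarith) (by rw [abs_of_neg hlt] at harg2; linarith)
        rw [Real.tan_neg] at h4
        rw [abs_of_neg hlt]
        exact h4.le.trans (neg_le_abs _)
      · simp [heq]
      · have h4 : Complex.arg ζ < Real.tan (Complex.arg ζ) :=
          Real.lt_tan hgt (by rw [abs_of_pos hgt] at harg2; linarith)
        rw [abs_of_pos hgt]
        exact h4.le.trans (le_abs_self _)
    have : |ζ.im| / ζ.re ≤ |ζ.im| := div_le_self (abs_nonneg _) h
    linarith
  linarith

noncomputable def Gc (z : ℂ) : ℂ :=
  ∫ u in Ioi (0:ℝ), Complex.log (1 + Complex.exp (z - (u:ℂ)^2))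

def Strip : Set ℂ := Complex.im ⁻¹' Ioo (-1) 1

lemma isOpen_strip : IsOpen Strip := isOpen_Ioo.preimage Complex.continuous_im

lemma re_one_add_exp {z : ℂ} (hz : z ∈ Strip) (u : ℝ) :
    1 ≤ (1 + Complex.exp (z - (u:ℂ)^2)).re := by
  have him : |z.im| < 1 := abs_lt.2 ⟨hz.1, hz.2⟩
  have hcos : 0 < Real.cos z.im := by
    apply Real.cos_pos_of_mem_Ioo
    obtain ⟨a, b⟩ := abs_lt.1 him
    have hpi := Real.pi_gt_three
    constructor <;> [linarith; linarith]
  have : (1 + Complex.exp (z - (u:ℂ)^2)).re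
      = 1 + Real.exp (z.re - u^2) * Real.cos z.im := by
    simp [Complex.add_re, Complex.exp_re, Complex.sub_re, Complex.sub_im, ← Complex.ofReal_pow, Complex.ofReal_re, Complex.ofReal_im]
  rw [this]
  nlinarith [Real.exp_pos (z.re - u^2)]

lemma slitPlane_one_add_exp {z : ℂ} (hz : z ∈ Strip) (u : ℝ) :
    1 + Complex.exp (z - (u:ℂ)^2) ∈ Complex.slitPlane :=
  Or.inl (lt_of_lt_of_le one_pos (re_one_add_exp hz u))

lemma abs_exp_sub_sq (z : ℂ) (u : ℝ) :
    ‖Complex.exp (z - (u:ℂ)^2)‖ = Real.exp z.re * Real.exp (-u^2) := by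
  rw [Complex.norm_exp, ← Real.exp_add]
  congr 1
  simp [Complex.sub_re, ← Complex.ofReal_pow, Complex.ofReal_re]
  ring

lemma continuous_F {z : ℂ} (hz : z ∈ Strip) :
    Continuous fun u : ℝ => Complex.log (1 + Complex.exp (z - (u:ℂ)^2)) := by
  rw [continuous_iff_continuousAt]
  intro u
  have hc : ContinuousAt (fun u : ℝ => 1 + Complex.exp (z - (u:ℂ)^2)) u := by fun_prop
  exact hc.clog (slitPlane_one_add_exp hz u)

lemma integrable_bound (R : ℝ) (c : ℝ) :
    Integrable (fun u : ℝ => c * Real.exp R * Real.exp (-u^2))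
      (volume.restrict (Ioi (0:ℝ))) := by
  have h : Integrable (fun u : ℝ => Real.exp (-1 * u^2)) := by
    simpa using integrable_exp_neg_mul_sq (b := 1) one_pos
  have := (h.integrableOn (s := Ioi (0:ℝ))).const_mul (c * Real.exp R)
  simpa [mul_assoc, neg_one_mul] using this

lemma integrable_F {z : ℂ} (hz : z ∈ Strip) :
    Integrable (fun u : ℝ => Complex.log (1 + Complex.exp (z - (u:ℂ)^2)))
      (volume.restrict (Ioi (0:ℝ))) := by
  apply Integrable.mono' (integrable_bound z.re 2)
  · exact (continuous_F hz).aestronglyMeasurable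
  · filter_upwards with u
    have h1 := norm_clog_le (re_one_add_exp hz u)
    have h2 : ‖1 + Complex.exp (z - (u:ℂ)^2) - 1‖
        = Real.exp z.re * Real.exp (-u^2) := by
      rw [add_sub_cancel_left]; exact abs_exp_sub_sq z u
    rw [h2] at h1
    calc ‖Complex.log (1 + Complex.exp (z - (u:ℂ)^2))‖
        ≤ 2 * (Real.exp z.re * Real.exp (-u^2)) := h1
      _ = 2 * Real.exp z.re * Real.exp (-u^2) := by ring

lemma differentiableAt_Gc {z₀ : ℂ} (hz₀ : z₀ ∈ Strip) : DifferentiableAt ℂ Gc z₀ := by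
  obtain ⟨hlo, hhi⟩ := hz₀
  set ε : ℝ := min ((1 - |z₀.im|) / 2) 1 with hε
  have him : |z₀.im| < 1 := abs_lt.2 ⟨hlo, hhi⟩
  have hεpos : 0 < ε := lt_min (by linarith) one_pos
  have hball : Metric.ball z₀ ε ⊆ Strip := by
    intro z hz
    have hd : ‖z - z₀‖ < ε := by
      simpa [Complex.dist_eq] using hz
    have : |z.im - z₀.im| ≤ ‖z - z₀‖ := by
      simpa using Complex.abs_im_le_norm (z - z₀)
    have h1 : |z.im - z₀.im| < (1 - |z₀.im|) / 2 := lt_of_le_of_lt this (hd.trans_le (min_le_left _ _))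
    have habs : |z.im| < 1 := by
      have := abs_sub_abs_le_abs_sub z.im z₀.im
      linarith
    exact ⟨(abs_lt.1 habs).1, (abs_lt.1 habs).2⟩
  set R : ℝ := z₀.re + ε with hR
  have hre : ∀ z ∈ Metric.ball z₀ ε, z.re ≤ R := by
    intro z hz
    have hd : ‖z - z₀‖ < ε := by simpa [Complex.dist_eq] using hz
    have : |z.re - z₀.re| ≤ ‖z - z₀‖ := by
      simpa using Complex.abs_re_le_norm (z - z₀)
    have := (abs_lt.1 (lt_of_le_of_lt this hd)).2
    simp only [hR]; linarith
  have key := hasDerivAt_integral_of_dominated_loc_of_deriv_le (μ := volume.restrict (Ioi (0:ℝ)))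
      (F := fun z u => Complex.log (1 + Complex.exp (z - (u:ℂ)^2)))
      (F' := fun z u => Complex.exp (z - (u:ℂ)^2) / (1 + Complex.exp (z - (u:ℂ)^2)))
      (x₀ := z₀) (s := Metric.ball z₀ ε) (bound := fun u => Real.exp R * Real.exp (-u^2)) (Metric.ball_mem_nhds z₀ hεpos) ?_ ?_ ?_ ?_ ?_ ?_
  · exact key.2.differentiableAt
  · filter_upwards [isOpen_strip.mem_nhds ⟨hlo, hhi⟩] with z hz
    exact (continuous_F hz).aestronglyMeasurable
  · exact integrable_F ⟨hlo, hhi⟩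
  · apply Continuous.aestronglyMeasurable
    apply Continuous.div (by fun_prop) (by fun_prop)
    intro u
    intro heq
    have := re_one_add_exp ⟨hlo, hhi⟩ u
    rw [heq] at this
    simp at this
    linarith
  · filter_upwards with u z hz
    have h1 : 1 ≤ ‖1 + Complex.exp (z - (u:ℂ)^2)‖ :=
      le_trans (re_one_add_exp (hball hz) u) (Complex.re_le_norm _)
    rw [norm_div]
    calc ‖Complex.exp (z - (u:ℂ)^2)‖ / ‖1 + Complex.exp (z - (u:ℂ)^2)‖
        ≤ ‖Complex.exp (z - (u:ℂ)^2)‖ / 1 := by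
          apply div_le_div_of_nonneg_left (norm_nonneg _) one_pos h1
      _ = Real.exp z.re * Real.exp (-u^2) := by
          rw [div_one, abs_exp_sub_sq]
      _ ≤ Real.exp R * Real.exp (-u^2) := by
          have := Real.exp_le_exp.2 (hre z hz)
          nlinarith [Real.exp_pos (-u^2), Real.exp_pos z.re]
  · simpa using integrable_bound R 1
  · filter_upwards with u z hz
    have hd : HasDerivAt (fun z : ℂ => 1 + Complex.exp (z - (u:ℂ)^2))
        (Complex.exp (z - (u:ℂ)^2)) z := by
      have : HasDerivAt (fun z : ℂ => z - (u:ℂ)^2) 1 z := (hasDerivAt_id z).sub_const _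
      simpa using (this.cexp.const_add 1)
    simpa using hd.clog (slitPlane_one_add_exp (hball hz) u)

lemma analyticOnNhd_Gc : AnalyticOnNhd ℂ Gc Strip :=
  DifferentiableOn.analyticOnNhd
    (fun z hz => (differentiableAt_Gc hz).differentiableWithinAt) isOpen_strip

noncomputable def G (t : ℝ) : ℝ := ∫ u in Ioi (0:ℝ), Real.log (1 + Real.exp (t - u^2))

lemma Gc_ofReal (t : ℝ) : Gc (t:ℂ) = ((G t : ℝ) : ℂ) := by
  unfold Gc G
  have hint : ∀ u : ℝ, Complex.log (1 + Complex.exp ((t:ℂ) - (u:ℂ)^2))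
      = ((Real.log (1 + Real.exp (t - u^2)) : ℝ) : ℂ) := by
    intro u
    have h1 : ((t:ℂ) - (u:ℂ)^2) = ((t - u^2 : ℝ) : ℂ) := by push_cast; ring
    have hpos : (0:ℝ) < 1 + Real.exp (t - u^2) := by positivity
    rw [h1, ← Complex.ofReal_exp, ← Complex.ofReal_one, ← Complex.ofReal_add,
      ← Complex.ofReal_log hpos.le]
  simp_rw [hint]
  exact integral_ofReal

lemma analyticAt_G (t : ℝ) : AnalyticAt ℝ G t := by
  have hmem : (t:ℂ) ∈ Strip := by
    constructor <;> simp
  have h1 : AnalyticAt ℝ (fun x : ℝ => (Gc (x:ℂ)).re) t := by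
    apply (Complex.reCLM.analyticAt _).comp
    exact ((analyticOnNhd_Gc _ hmem).restrictScalars).comp (Complex.ofRealCLM.analyticAt t)
  have : (fun x : ℝ => (Gc (x:ℂ)).re) = G := by
    funext x
    rw [Gc_ofReal, Complex.ofReal_re]
  rwa [this] at h1

lemma analyticAt_inv_sqrt {x₀ : ℝ} (h : 0 < x₀) :
    AnalyticAt ℝ (fun x : ℝ => (Real.sqrt x)⁻¹) x₀ := by
  have hm : (x₀:ℂ) ∈ Complex.slitPlane := Or.inl (by simpa using h)
  have hne : ((x₀:ℂ) ^ (1/2 : ℂ)) ≠ 0 := by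
    rw [Ne, Complex.cpow_eq_zero_iff, not_and_or]
    left
    simpa using h.ne'
  have hc : AnalyticAt ℂ (fun z : ℂ => (z ^ (1/2 : ℂ))⁻¹) (x₀:ℂ) :=
    ((analyticAt_id.cpow analyticAt_const hm).inv hne)
  have hr : AnalyticAt ℝ (fun x : ℝ => ((((x:ℂ)) ^ (1/2 : ℂ))⁻¹).re) x₀ :=
    (Complex.reCLM.analyticAt _).comp
      ((hc.restrictScalars).comp (Complex.ofRealCLM.analyticAt x₀))
  apply hr.congr
  filter_upwards [Ioi_mem_nhds h] with x hx
  have hx0 : (0:ℝ) < x := hx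
  rw [show (1/2 : ℂ) = ((1/2 : ℝ) : ℂ) by norm_num,
    ← Complex.ofReal_cpow hx0.le, ← Complex.ofReal_inv, Complex.ofReal_re,
    ← Real.sqrt_eq_rpow]

lemma integral_eq {β μR : ℝ} (hβ : 0 < β) :
    (∫ k in Ioi (0:ℝ), Real.log (1 + Real.exp (-β * (k ^ 2 - μR))))
      = (Real.sqrt β)⁻¹ * G (β * μR) := by
  have hc : 0 < Real.sqrt β := Real.sqrt_pos.2 hβ
  have hid : ∀ k : ℝ, -β * (k ^ 2 - μR) = β * μR - (Real.sqrt β * k)^2 := by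
    intro k
    rw [mul_pow, Real.sq_sqrt hβ.le]
    ring
  calc (∫ k in Ioi (0:ℝ), Real.log (1 + Real.exp (-β * (k ^ 2 - μR))))
      = ∫ k in Ioi (0:ℝ),
          (fun u => Real.log (1 + Real.exp (β * μR - u^2))) (Real.sqrt β * k) := by
        congr 1; funext k; rw [hid k]
    _ = (Real.sqrt β)⁻¹ • ∫ u in Ioi (Real.sqrt β * 0),
          Real.log (1 + Real.exp (β * μR - u^2)) :=
        integral_comp_mul_left_Ioi
          (fun u => Real.log (1 + Real.exp (β * μR - u^2))) 0 hc
    _ = (Real.sqrt β)⁻¹ * G (β * μR) := by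
        rw [mul_zero, smul_eq_mul]; rfl

/-- The grand-canonical free-energy density of the 1D hardcore Bose gas
(= free Fermi gas) is a smooth function of `(β, μ)` on `{β > 0}`. -/
theorem freeEnergy_smooth :
    ContDiffOn ℝ (⊤ : ℕ∞)
      (fun p : ℝ × ℝ =>
        -(1 / (π * p.1)) *
          ∫ k in Set.Ioi (0 : ℝ), Real.log (1 + Real.exp (-p.1 * (k ^ 2 - p.2))))
      {p : ℝ × ℝ | 0 < p.1} := by
  have hopen : IsOpen {p : ℝ × ℝ | 0 < p.1} := isOpen_lt continuous_const continuous_fst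
  apply AnalyticOnNhd.contDiffOn _ hopen.uniqueDiffOn
  intro p hp
  have hp1 : (0:ℝ) < p.1 := hp
  have ha : AnalyticAt ℝ
      (fun q : ℝ × ℝ => -(1 / (π * q.1)) * ((Real.sqrt q.1)⁻¹ * G (q.1 * q.2))) p := by
    apply AnalyticAt.mul
    · apply AnalyticAt.neg
      exact AnalyticAt.div analyticAt_const (analyticAt_const.mul analyticAt_fst)
        (mul_ne_zero Real.pi_ne_zero hp1.ne')
    · exact ((analyticAt_inv_sqrt hp1).comp analyticAt_fst).mul
        ((analyticAt_G _).comp (analyticAt_fst.mul analyticAt_snd))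
  apply ha.congr
  filter_upwards [hopen.mem_nhds hp] with q hq
  rw [integral_eq (show (0:ℝ) < q.1 from hq)]
end

section
/- For the free Bose gas on [0,𝓛] with Neumann boundary conditions (one-particle eigenvalues (nπ/𝓛)², n ≥ 0, ground state energy 0), the grand-canonical ground-state occupation density n₀(𝓛)/𝓛 = (1/𝓛)·1/(e^{-βμ(𝓛)} - 1) tends to 0 as 𝓛 → ∞ whenever the chemical potentials μ(𝓛) < 0 are chosen so that the total density Σ_n (1/𝓛)/(e^{β((nπ/𝓛)² - μ(𝓛))} - 1) stays equal to a fixed ρ > 0. -/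
open Real Filter

private lemma exp_term_lower_bound (L x X : ℝ) (hL : 0 < L) (hx : 0 < x) (hxX : x ≤ X) :
    (1/L) * (Real.exp (-X) / X) ≤ (1/L) / (Real.exp x - 1) := by
  have hXpos : 0 < X := lt_of_lt_of_le hx hxX
  have hXe : Real.exp x - 1 ≤ X * Real.exp X := by
    have h6 : Real.exp x ≤ Real.exp X := Real.exp_le_exp.2 hxX
    have h7 : 1 - X ≤ Real.exp (-X) := by linarith [Real.add_one_le_exp (-X)]
    have h8 : Real.exp (-X) * Real.exp X = 1 := by rw [← Real.exp_add]; simp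
    nlinarith [Real.exp_pos X]
  have hxden : 0 < Real.exp x - 1 := by
    have : 1 < Real.exp x := Real.one_lt_exp_iff.2 hx
    linarith
  have heq : (1/L) * (Real.exp (-X) / X) = (1/L) / (X * Real.exp X) := by
    rw [Real.exp_neg]; field_simp
  rw [heq]
  exact div_le_div_of_nonneg_left (by positivity) hxden hXe

/-- Absence of BEC for the 1D free Bose gas with Neumann boundary conditions:
if the chemical potentials `μ(𝓛) < 0` are chosen so that the total density
`Σ_{n≥0} (1/𝓛)/(e^{β((nπ/𝓛)²-μ(𝓛))}-1)` equals a fixed `ρ > 0`, then the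
ground-state occupation density `(1/𝓛)·1/(e^{-βμ(𝓛)}-1)` tends to `0` as
`𝓛 → ∞`. -/
theorem no_bec_neumann_interval (β ρ : ℝ) (hβ : 0 < β) (hρ : 0 < ρ)
    (μ : ℝ → ℝ) (hμneg : ∀ 𝓛 > 0, μ 𝓛 < 0)
    (hdensity : ∀ 𝓛 > 0,
      (∑' n : ℕ, (1 / 𝓛) / (Real.exp (β * (((n : ℝ) * π / 𝓛) ^ 2 - μ 𝓛)) - 1))
        = ρ) :
    Tendsto (fun 𝓛 : ℝ => (1 / 𝓛) * (1 / (Real.exp (-β * μ 𝓛) - 1)))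
      atTop (nhds 0) := by
  have hπ : (0:ℝ) < π := Real.pi_pos
  rw [Metric.tendsto_atTop]
  intro ε hε
  set E : ℝ := Real.exp (-(2*β)) with hE_def
  have hE : 0 < E := Real.exp_pos _
  set s : ℝ := min 1 (E / (8*π*β*ρ)) with hs_def
  have hs_pos : 0 < s := lt_min one_pos (by positivity)
  have hs1 : s ≤ 1 := min_le_left _ _
  have hs2 : s ≤ E / (8*π*β*ρ) := min_le_right _ _
  refine ⟨max (max (2*π/s) (1/(ε*β*s^2))) 1, fun 𝓛 h𝓛 => ?_⟩
  have h𝓛1 : (1:ℝ) ≤ 𝓛 := le_trans (le_max_right _ _) h𝓛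
  have h𝓛pos : 0 < 𝓛 := by linarith
  have hA : 2*π/s ≤ 𝓛 := le_trans (le_trans (le_max_left _ _) (le_max_left _ _)) h𝓛
  have hB : 1/(ε*β*s^2) ≤ 𝓛 := le_trans (le_trans (le_max_right _ _) (le_max_left _ _)) h𝓛
  have hμ : μ 𝓛 < 0 := hμneg 𝓛 h𝓛pos
  have hexp1 : 1 < Real.exp (-β * μ 𝓛) := by
    rw [Real.one_lt_exp_iff]; nlinarith
  have hden : 0 < Real.exp (-β * μ 𝓛) - 1 := by linarith
  have hfpos : 0 < (1/𝓛) * (1/(Real.exp (-β * μ 𝓛) - 1)) := by positivity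
  rw [Real.dist_eq, sub_zero, abs_of_pos hfpos]
  by_contra hcon
  push_neg at hcon
  set d : ℝ := Real.exp (-β * μ 𝓛) - 1 with hd_def
  -- from `ε ≤ (1/𝓛)*(1/d)` deduce `ε * 𝓛 * d ≤ 1`
  have key : ε * (𝓛 * d) ≤ 1 := by
    have h2 : ε * (𝓛 * d) ≤ ((1/𝓛) * (1/d)) * (𝓛 * d) :=
      mul_le_mul_of_nonneg_right hcon (by positivity)
    calc ε * (𝓛 * d) ≤ ((1/𝓛) * (1/d)) * (𝓛 * d) := h2
      _ = 1 := by field_simp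
  -- `-β μ ≤ d`
  have hμd : -β * μ 𝓛 ≤ d := by
    have := Real.add_one_le_exp (-β * μ 𝓛)
    simp only [hd_def]; linarith
  -- hence `-μ 𝓛 ≤ s^2`
  have hμs : -μ 𝓛 ≤ s^2 := by
    have h3' : (ε*𝓛) * (-β * μ 𝓛) ≤ (ε*𝓛) * d :=
      mul_le_mul_of_nonneg_left hμd (mul_pos hε h𝓛pos).le
    have h3 : ε * (𝓛 * (-β * μ 𝓛)) ≤ 1 := by nlinarith
    have h4 : 1 ≤ 𝓛 * (ε*β*s^2) := by
      rw [div_le_iff₀ (by positivity)] at hB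
      nlinarith
    have h5 : ε * (𝓛 * (-β * μ 𝓛)) ≤ 𝓛 * (ε*β*s^2) := le_trans h3 h4
    nlinarith
  -- summability of the density series
  have hsum := hdensity 𝓛 h𝓛pos
  set F : ℕ → ℝ := fun n => (1 / 𝓛) / (Real.exp (β * (((n : ℝ) * π / 𝓛) ^ 2 - μ 𝓛)) - 1)
    with hF_def
  have hFpos : ∀ n : ℕ, 0 < F n := by
    intro n
    have hx : 0 < β * (((n : ℝ) * π / 𝓛) ^ 2 - μ 𝓛) := by
      nlinarith [sq_nonneg ((n : ℝ) * π / 𝓛)]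
    have : 1 < Real.exp (β * (((n : ℝ) * π / 𝓛) ^ 2 - μ 𝓛)) := Real.one_lt_exp_iff.2 hx
    have hpos : 0 < Real.exp (β * (((n : ℝ) * π / 𝓛) ^ 2 - μ 𝓛)) - 1 := by linarith
    exact div_pos (by positivity) hpos
  have hsummable : Summable F := by
    by_contra h
    rw [show (∑' n : ℕ, (1 / 𝓛) / (Real.exp (β * (((n : ℝ) * π / 𝓛) ^ 2 - μ 𝓛)) - 1))
        = ∑' n, F n from rfl, tsum_eq_zero_of_not_summable h] at hsum
    linarith
  -- lower bound for terms with 1 ≤ n ≤ M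
  set M : ℕ := ⌊𝓛 * s / π⌋₊ with hM_def
  set X : ℝ := 2*β*s^2 with hX_def
  have hXpos : 0 < X := by positivity
  have hterm : ∀ n ∈ Finset.Icc 1 M, (1/𝓛) * (Real.exp (-X) / X) ≤ F n := by
    intro n hn
    have hnM : (n : ℝ) ≤ 𝓛 * s / π := by
      exact_mod_cast le_trans (Nat.cast_le.mpr (Finset.mem_Icc.mp hn).2)
        (Nat.floor_le (by positivity))
    have hns : (n : ℝ) * π / 𝓛 ≤ s := by
      rw [div_le_iff₀ h𝓛pos]
      rw [le_div_iff₀ hπ] at hnM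
      linarith
    have hnπnn : 0 ≤ (n : ℝ) * π / 𝓛 := by positivity
    have hsq : ((n : ℝ) * π / 𝓛) ^ 2 ≤ s^2 := pow_le_pow_left₀ hnπnn hns 2
    have hxpos : 0 < β * (((n : ℝ) * π / 𝓛) ^ 2 - μ 𝓛) :=
      mul_pos hβ (by linarith [sq_nonneg ((n : ℝ) * π / 𝓛)])
    have hxX : β * (((n : ℝ) * π / 𝓛) ^ 2 - μ 𝓛) ≤ X := by
      have h' : ((n : ℝ) * π / 𝓛) ^ 2 - μ 𝓛 ≤ 2*s^2 := by linarith
      calc β * (((n : ℝ) * π / 𝓛) ^ 2 - μ 𝓛) ≤ β * (2*s^2) :=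
            mul_le_mul_of_nonneg_left h' hβ.le
        _ = X := by rw [hX_def]; ring
    exact exp_term_lower_bound 𝓛 _ X h𝓛pos hxpos hxX
  -- sum the lower bounds
  have hcard : (Finset.Icc 1 M).card = M := by simp
  have hsumM : (M : ℝ) * ((1/𝓛) * (Real.exp (-X) / X)) ≤ ∑ n ∈ Finset.Icc 1 M, F n := by
    calc (M : ℝ) * ((1/𝓛) * (Real.exp (-X) / X))
        = ∑ _n ∈ Finset.Icc 1 M, (1/𝓛) * (Real.exp (-X) / X) := by
          rw [Finset.sum_const, hcard]; ring
      _ ≤ ∑ n ∈ Finset.Icc 1 M, F n := Finset.sum_le_sum hterm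
  have hle_tsum : ∑ n ∈ Finset.Icc 1 M, F n ≤ ρ := by
    rw [← hsum]
    exact Summable.sum_le_tsum _ (fun n _ => (hFpos n).le) hsummable
  -- lower bound on M
  have hMge : 𝓛 * s / (2*π) ≤ (M : ℝ) := by
    have h9 : 𝓛 * s / π < (M : ℝ) + 1 := by
      exact_mod_cast Nat.lt_floor_add_one (𝓛 * s / π)
    have h10 : 2 ≤ 𝓛 * s / π := by
      rw [le_div_iff₀ hπ]
      rw [div_le_iff₀ hs_pos] at hA
      linarith
    have h11 : 𝓛 * s / (2*π) + 1 ≤ 𝓛 * s / π := by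
      have hteq : 𝓛 * s / (2*π) = 𝓛 * s / π / 2 := by rw [div_div, mul_comm π 2]
      rw [hteq]; linarith
    linarith
  -- final contradiction
  have hmain : E / (4*π*β*s) ≤ ρ := by
    have h12 : E ≤ Real.exp (-X) := by
      apply Real.exp_le_exp.2
      have hss : s^2 ≤ 1 := pow_le_one₀ hs_pos.le hs1
      have h2b : 2*β*s^2 ≤ 2*β*1 :=
        mul_le_mul_of_nonneg_left hss (by linarith)
      simp only [hX_def]; linarith
    have h13 : (𝓛 * s / (2*π)) * ((1/𝓛) * (Real.exp (-X) / X)) ≤ ρ := by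
      calc (𝓛 * s / (2*π)) * ((1/𝓛) * (Real.exp (-X) / X))
          ≤ (M : ℝ) * ((1/𝓛) * (Real.exp (-X) / X)) :=
            mul_le_mul_of_nonneg_right hMge (by positivity)
        _ ≤ ρ := le_trans hsumM hle_tsum
    have h14 : (𝓛 * s / (2*π)) * ((1/𝓛) * (Real.exp (-X) / X)) = Real.exp (-X) / (4*π*β*s) := by
      simp only [hX_def]
      field_simp
      ring
    rw [h14] at h13
    calc E / (4*π*β*s) ≤ Real.exp (-X) / (4*π*β*s) := by gcongr
      _ ≤ ρ := h13
  have h15 : 2*ρ ≤ E / (4*π*β*s) := by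
    rw [le_div_iff₀ (by positivity)]
    rw [le_div_iff₀ (by positivity)] at hs2
    calc 2*ρ*(4*π*β*s) = s*(8*π*β*ρ) := by ring
      _ ≤ E := hs2
  linarith
end

section
/- Let Q[f] = ∫₀^l |f'|² dx - L|f(0)|² on {f ∈ H¹(0,l) : f(l) = 0} with L > 0. Then the infimum of the Rayleigh quotient Q[f]/‖f‖² is bounded below by -L² - C/l for some constant C > 0 independent of l, and choosing the trial function f(x) = e^{-Lx} - e^{-L(2l - x)} shows it is bounded above by a quantity converging to -L² as l → ∞; hence the ground state energy converges to -L². -/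
open Real MeasureTheory Filter

/-- Rayleigh quotient of the form `Q[f] = ∫₀^l |f'|² - L|f(0)|²` on `(0,l)`. -/
noncomputable def rayleigh (L l : ℝ) (f : ℝ → ℝ) : ℝ :=
  ((∫ x in (0:ℝ)..l, (deriv f x) ^ 2) - L * (f 0) ^ 2) /
    (∫ x in (0:ℝ)..l, (f x) ^ 2)

/-- Admissible trial functions for the form on `(0,l)` with Dirichlet
condition at `l`. -/
def admissible (l : ℝ) (f : ℝ → ℝ) : Prop :=
  ContDiff ℝ 1 f ∧ f l = 0 ∧ (∫ x in (0:ℝ)..l, (f x) ^ 2) ≠ 0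

/-! Completing the square: for `f(l) = 0`, `∫ f'² - L f(0)² + L² ∫ f² = ∫ (f' + L f)² ≥ 0`, so
every Rayleigh quotient is at least `-L²`. For the trial function the defect `f' + L f` equals
`-2L e^{-L(2l-x)}`, whose square integrates to `O(e^{-2Ll})`, while `‖f‖² → 1/(2L)`; so its
quotient tends to `-L²`, and the ground state energy is squeezed in between. -/

open intervalIntegral

theorem integral_deriv_add_mul_sq {f : ℝ → ℝ} (hf : ContDiff ℝ 1 f) (L a b : ℝ) :
    ∫ x in a..b, (deriv f x + L * f x) ^ 2 =
      (∫ x in a..b, deriv f x ^ 2) + L * (f b ^ 2 - f a ^ 2) + L ^ 2 * ∫ x in a..b, f x ^ 2 := by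
  have hf₀ : Continuous f := hf.continuous
  have hf₁ : Continuous (deriv f) := hf.continuous_deriv le_rfl
  have hcross : ∫ x in a..b, 2 * f x * deriv f x = f b ^ 2 - f a ^ 2 := by
    refine integral_eq_sub_of_hasDerivAt (f := fun x => f x ^ 2) (fun x _ => ?_)
      ((by fun_prop : Continuous fun x => 2 * f x * deriv f x).intervalIntegrable _ _)
    exact ((hf.differentiable one_ne_zero x).hasDerivAt.fun_pow 2).congr_deriv (by ring)
  calc ∫ x in a..b, (deriv f x + L * f x) ^ 2
      = ∫ x in a..b, deriv f x ^ 2 + L * (2 * f x * deriv f x) + L ^ 2 * f x ^ 2 :=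
        integral_congr fun x _ => by ring
    _ = _ := by
        rw [intervalIntegral.integral_add, intervalIntegral.integral_add,
          intervalIntegral.integral_const_mul, intervalIntegral.integral_const_mul, hcross] <;>
          exact Continuous.intervalIntegrable (by fun_prop) _ _

theorem rayleigh_eq_neg_sq_add {L l : ℝ} {f : ℝ → ℝ} (hf : admissible l f) :
    rayleigh L l f =
      -L ^ 2 + (∫ x in 0..l, (deriv f x + L * f x) ^ 2) / ∫ x in 0..l, f x ^ 2 := by
  obtain ⟨hf, hfl, hN⟩ := hf
  rw [rayleigh, integral_deriv_add_mul_sq hf, hfl]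
  field_simp
  ring

theorem neg_sq_le_rayleigh (L : ℝ) {l : ℝ} (hl : 0 ≤ l) {f : ℝ → ℝ} (hf : admissible l f) :
    -L ^ 2 ≤ rayleigh L l f := by
  rw [rayleigh_eq_neg_sq_add hf]
  exact le_add_of_nonneg_right <| div_nonneg (integral_nonneg hl fun _ _ => sq_nonneg _)
    (integral_nonneg hl fun _ _ => sq_nonneg _)

theorem integral_exp_mul {c : ℝ} (hc : c ≠ 0) (a b : ℝ) :
    ∫ x in a..b, exp (c * x) = (exp (c * b) - exp (c * a)) / c := by
  rw [integral_comp_mul_left (fun x => exp x) hc, integral_exp, smul_eq_mul, inv_mul_eq_div]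

/-- The half-line bound state `e^{-Lx}` minus its mirror image in `x = l`. -/
noncomputable def trialFunction (L l x : ℝ) : ℝ := exp (-L * x) - exp (-L * (2 * l - x))

theorem hasDerivAt_trialFunction (L l x : ℝ) :
    HasDerivAt (trialFunction L l) (-L * exp (-L * x) - L * exp (-L * (2 * l - x))) x := by
  have h := ((hasDerivAt_id x).const_mul (-L)).exp.sub
    (((hasDerivAt_id x).const_sub (2 * l)).const_mul (-L)).exp
  exact h.congr_deriv (by simp only [id_eq]; ring)

theorem deriv_trialFunction_add_mul (L l x : ℝ) :
    deriv (trialFunction L l) x + L * trialFunction L l x = -2 * L * exp (-L * (2 * l - x)) := by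
  rw [(hasDerivAt_trialFunction L l x).deriv, trialFunction]
  ring

theorem trialFunction_admissible {L l : ℝ} (hL : L ≠ 0) (hl : 0 < l) :
    admissible l (trialFunction L l) := by
  refine ⟨by unfold trialFunction; fun_prop, by simp [trialFunction, two_mul], ?_⟩
  refine (intervalIntegral_pos_of_pos_on
    (Continuous.intervalIntegrable (by unfold trialFunction; fun_prop) _ _) (fun x hx => ?_) hl).ne'
  have hne : -L * (2 * l - x) ≠ -L * x := by
    intro h
    have := mul_left_cancel₀ (neg_ne_zero.mpr hL) h
    linarith [hx.2]
  exact pow_two_pos_of_ne_zero (sub_ne_zero.mpr (exp_injective.ne hne.symm))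

theorem trialFunction_sq (L l x : ℝ) :
    trialFunction L l x ^ 2 =
      exp (-(2 * L) * x) - 2 * exp (-(2 * L) * l) + exp (-(4 * L) * l) * exp (2 * L * x) := by
  rw [trialFunction, sub_sq, sq, sq, mul_assoc, ← exp_add, ← exp_add, ← exp_add, ← exp_add]
  ring_nf

theorem deriv_trialFunction_add_mul_sq (L l x : ℝ) :
    (deriv (trialFunction L l) x + L * trialFunction L l x) ^ 2 =
      4 * L ^ 2 * (exp (-(4 * L) * l) * exp (2 * L * x)) := by
  rw [deriv_trialFunction_add_mul, mul_pow, sq (exp _), ← exp_add, ← exp_add]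
  ring_nf

theorem exp_neg_four_mul_mul_exp_two_mul (L l : ℝ) :
    exp (-(4 * L) * l) * exp (2 * L * l) = exp (-(2 * L) * l) := by
  rw [← exp_add]
  ring_nf

theorem integral_trialFunction_sq {L : ℝ} (hL : L ≠ 0) (l : ℝ) :
    ∫ x in 0..l, trialFunction L l x ^ 2 =
      (1 - exp (-(4 * L) * l)) / (2 * L) - 2 * (l * exp (-(2 * L) * l)) := by
  have h2L : 2 * L ≠ 0 := by positivity
  have hexp := exp_neg_four_mul_mul_exp_two_mul L l
  simp_rw [trialFunction_sq]
  rw [intervalIntegral.integral_add, intervalIntegral.integral_sub,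
    intervalIntegral.integral_const, intervalIntegral.integral_const_mul,
    integral_exp_mul (neg_ne_zero.mpr h2L), integral_exp_mul h2L]
  · simp only [mul_zero, exp_zero, sub_zero, smul_eq_mul]
    generalize exp (-(4 * L) * l) = E₄ at hexp ⊢
    generalize exp (-(2 * L) * l) = E₂ at hexp ⊢
    generalize exp (2 * L * l) = P at hexp ⊢
    field_simp
    linear_combination hexp
  all_goals exact Continuous.intervalIntegrable (by fun_prop) _ _

theorem integral_deriv_trialFunction_add_mul_sq {L : ℝ} (hL : L ≠ 0) (l : ℝ) :
    ∫ x in 0..l, (deriv (trialFunction L l) x + L * trialFunction L l x) ^ 2 =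
      2 * L * (exp (-(2 * L) * l) - exp (-(4 * L) * l)) := by
  have h2L : 2 * L ≠ 0 := by positivity
  have hexp := exp_neg_four_mul_mul_exp_two_mul L l
  simp_rw [deriv_trialFunction_add_mul_sq]
  rw [intervalIntegral.integral_const_mul, intervalIntegral.integral_const_mul,
    integral_exp_mul h2L]
  simp only [mul_zero, exp_zero]
  generalize exp (-(4 * L) * l) = E₄ at hexp ⊢
  generalize exp (-(2 * L) * l) = E₂ at hexp ⊢
  generalize exp (2 * L * l) = P at hexp ⊢
  field_simp
  linear_combination 4 * hexp

theorem tendsto_rayleigh_trialFunction {L : ℝ} (hL : 0 < L) :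
    Tendsto (fun l => rayleigh L l (trialFunction L l)) atTop (nhds (-L ^ 2)) := by
  have hexp : ∀ b > 0, Tendsto (fun l => exp (-b * l)) atTop (nhds 0) := fun b hb => by
    simpa using tendsto_rpow_mul_exp_neg_mul_atTop_nhds_zero 0 b hb
  have hmul : Tendsto (fun l => l * exp (-(2 * L) * l)) atTop (nhds 0) := by
    simpa using tendsto_rpow_mul_exp_neg_mul_atTop_nhds_zero 1 (2 * L) (by positivity)
  have hD : Tendsto (fun l => 2 * L * (exp (-(2 * L) * l) - exp (-(4 * L) * l)))
      atTop (nhds 0) := by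
    simpa using ((hexp _ (by positivity)).sub (hexp _ (by positivity))).const_mul (2 * L)
  have hN : Tendsto (fun l => (1 - exp (-(4 * L) * l)) / (2 * L) - 2 * (l * exp (-(2 * L) * l)))
      atTop (nhds (1 / (2 * L))) := by
    have := ((tendsto_const_nhds (x := (1 : ℝ))).sub (hexp (4 * L) (by positivity))).div_const
      (2 * L) |>.sub (hmul.const_mul 2)
    simpa using this
  have := (hD.div hN (by positivity)).const_add (-L ^ 2)
  rw [zero_div, add_zero] at this
  refine this.congr' ?_
  filter_upwards [eventually_gt_atTop 0] with l hl
  rw [Pi.div_apply, rayleigh_eq_neg_sq_add (trialFunction_admissible hL.ne' hl),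
    integral_trialFunction_sq hL.ne', integral_deriv_trialFunction_add_mul_sq hL.ne']

noncomputable def groundStateEnergy (L l : ℝ) : ℝ :=
  sInf {E : ℝ | ∃ f, admissible l f ∧ E = rayleigh L l f}

theorem groundStateEnergy_mem_Icc (L : ℝ) {l : ℝ} (hl : 0 ≤ l) {g : ℝ → ℝ}
    (hg : admissible l g) :
    groundStateEnergy L l ∈ Set.Icc (-L ^ 2) (rayleigh L l g) := by
  have hlower : ∀ E ∈ {E : ℝ | ∃ f, admissible l f ∧ E = rayleigh L l f}, -L ^ 2 ≤ E := by
    rintro _ ⟨f, hf, rfl⟩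
    exact neg_sq_le_rayleigh L hl hf
  exact ⟨le_csInf ⟨_, g, hg, rfl⟩ hlower, csInf_le ⟨_, hlower⟩ ⟨g, hg, rfl⟩⟩

/-- Rayleigh-quotient argument: the infimum of `Q[f]/‖f‖²` is bounded below by
`-L² - C/l`; the trial function `f(x) = e^{-Lx} - e^{-L(2l-x)}` gives an upper
bound converging to `-L²`; hence the ground state energy tends to `-L²` as
`l → ∞`. -/
theorem rayleigh_ground_state_limit (L : ℝ) (hL : 0 < L) :
    (∃ C > 0, ∀ l > 0, ∀ f, admissible l f → -L ^ 2 - C / l ≤ rayleigh L l f) ∧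
    (∀ l > 0, admissible l
      (fun x => Real.exp (-L * x) - Real.exp (-L * (2 * l - x)))) ∧
    Tendsto
      (fun l : ℝ =>
        rayleigh L l (fun x => Real.exp (-L * x) - Real.exp (-L * (2 * l - x))))
      atTop (nhds (-L ^ 2)) ∧
    Tendsto (fun l : ℝ => sInf {E : ℝ | ∃ f, admissible l f ∧ E = rayleigh L l f})
      atTop (nhds (-L ^ 2)) := by
  have htrial : ∀ l > 0, admissible l (trialFunction L l) :=
    fun l hl => trialFunction_admissible hL.ne' hl
  refine ⟨⟨1, one_pos, fun l hl f hf => ?_⟩, htrial, tendsto_rayleigh_trialFunction hL, ?_⟩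
  · linarith [neg_sq_le_rayleigh L hl.le hf, one_div_pos.mpr hl]
  · refine tendsto_of_tendsto_of_tendsto_of_le_of_le' tendsto_const_nhds
      (tendsto_rayleigh_trialFunction hL) ?_ ?_ <;>
      filter_upwards [eventually_gt_atTop 0] with l hl
    exacts [(groundStateEnergy_mem_Icc L hl.le (htrial l hl)).1,
      (groundStateEnergy_mem_Icc L hl.le (htrial l hl)).2]
end
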